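/- For each k ≥ 0, the rectangular partial moment coefficient satisfies c_{2k+1,j} = Σ_{π ∈ NC'(2k+2j+2, 2j+1)} γ^{e(π)} Π_{S ∈ π} κ_{|S|}, where NC'(2n, ℓ) is the set of non-crossing partitions of {1,...,2n} with all blocks of even size and no block contained in {1,...,ℓ}, and e(π) is the number of blocks whose minimum element is even. -/
import Mathlib


open Finset
open scoped Classical

/-- A finite family `P` of subsets of `Fin n` is a non-crossing partition of `{0,…,n-1}`:
every element lies in exactly one block, no block is empty, and there is no crossing
`a < b < c < d` with `a, c` in one block and `b, d` in a different block. -/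
def IsNCPartition {n : ℕ} (P : Finset (Finset (Fin n))) : Prop :=
  (∀ i : Fin n, ∃! S : Finset (Fin n), S ∈ P ∧ i ∈ S) ∧ (∅ : Finset (Fin n)) ∉ P ∧
    ∀ S ∈ P, ∀ T ∈ P, ∀ a ∈ S, ∀ b ∈ T, ∀ c ∈ S, ∀ d ∈ T,
      a < b → b < c → c < d → S = T

/-- `NC'(n, ℓ)`: the non-crossing partitions of `{0,…,n-1}` with all blocks of even size, in
which no block is contained in the first `ℓ` elements `{0,…,ℓ-1}`. -/
noncomputable def NCEvenPrefix (n ℓ : ℕ) : Finset (Finset (Finset (Fin n))) :=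
  Finset.univ.filter fun P =>
    IsNCPartition P ∧ (∀ S ∈ P, Even S.card) ∧ ∀ S ∈ P, ∃ a ∈ S, ℓ ≤ (a : ℕ)

/-- `e(π)`: the number of blocks whose minimum element is even.  (In the paper's `1`-based
labelling `{1,…,n}`; in the `0`-based labelling `Fin n` this means the minimum has odd
index.) -/
noncomputable def evenMinCount {n : ℕ} (P : Finset (Finset (Fin n))) : ℕ :=
  (P.filter fun S => ∃ a : Fin n, a ∈ S ∧ (∀ b ∈ S, a ≤ b) ∧ (a : ℕ) % 2 = 1).card

/-- The even-indexed rectangular partial moment coefficients built from sequences `a, b`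
(playing the roles of `n ↦ κ_{2n}` and `n ↦ κ̄_{2n}`). -/
noncomputable def rcEven (a b : ℕ → ℝ) : ℕ → ℕ → ℝ
  | 0, j => if j = 0 then 1 else 0
  | k + 1, j =>
      ∑ m ∈ range (j + 1),
        (∑ m' ∈ range (m + 2), rcEven a b k m' * a (m + 1 - m')) * b (j - m)

/-- The odd-indexed rectangular partial moment coefficients
`c_{2k+1,j} = Σ_{m=0}^{j+1} c_{2k,m} a_{j+1−m}`. -/
noncomputable def rcOdd (a b : ℕ → ℝ) (k j : ℕ) : ℝ :=
  ∑ m ∈ range (j + 2), rcEven a b k m * a (j + 1 - m)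

noncomputable def wgt (γ : ℝ) (κ : ℕ → ℝ) {n : ℕ} (P : Finset (Finset (Fin n))) : ℝ :=
  γ ^ evenMinCount P * ∏ S ∈ P, κ S.card

noncomputable def Ssum (γ : ℝ) (κ : ℕ → ℝ) (N ℓ : ℕ) : ℝ :=
  ∑ P ∈ NCEvenPrefix N ℓ, wgt γ κ P

lemma mem_NCEvenPrefix {n ℓ : ℕ} {P : Finset (Finset (Fin n))} :
    P ∈ NCEvenPrefix n ℓ ↔ IsNCPartition P ∧ (∀ S ∈ P, Even S.card) ∧
      ∀ S ∈ P, ∃ a ∈ S, ℓ ≤ (a : ℕ) := by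
  simp [NCEvenPrefix]

lemma IsNCPartition.block_eq {n} {P : Finset (Finset (Fin n))} (h : IsNCPartition P)
    {S T : Finset (Fin n)} (hS : S ∈ P) (hT : T ∈ P) {i : Fin n} (hiS : i ∈ S) (hiT : i ∈ T) :
    S = T := by
  obtain ⟨U, _, hU⟩ := h.1 i
  rw [hU S ⟨hS, hiS⟩, hU T ⟨hT, hiT⟩]

/-- the interval block `{t, …, ℓ}` inside `Fin N`. -/
def itv (N t ℓ : ℕ) : Finset (Fin N) := univ.filter fun x => t ≤ (x : ℕ) ∧ (x : ℕ) ≤ ℓ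

lemma mem_itv {N t ℓ : ℕ} {x : Fin N} : x ∈ itv N t ℓ ↔ t ≤ (x : ℕ) ∧ (x : ℕ) ≤ ℓ := by
  simp [itv]

lemma card_itv {N t ℓ : ℕ} (hℓN : ℓ < N) (htℓ : t ≤ ℓ) : (itv N t ℓ).card = ℓ + 1 - t := by
  have : itv N t ℓ = Finset.Icc ⟨t, lt_of_le_of_lt htℓ hℓN⟩ ⟨ℓ, hℓN⟩ := by
    ext x; simp [mem_itv, Finset.mem_Icc, Fin.le_def]
  rw [this, Fin.card_Icc]

/-- the order embedding of `Fin (N-s)` into `Fin N` skipping the interval `{t,…,t+s-1}`. -/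
def gmap (N t s : ℕ) (h : t + s ≤ N) (i : Fin (N - s)) : Fin N :=
  if hi : (i : ℕ) < t then ⟨i, by omega⟩ else ⟨(i : ℕ) + s, by have := i.isLt; omega⟩

lemma gmap_val {N t s : ℕ} (h : t + s ≤ N) (i : Fin (N - s)) :
    (gmap N t s h i : ℕ) = if (i : ℕ) < t then (i : ℕ) else (i : ℕ) + s := by
  unfold gmap; split <;> simp

lemma gmap_strictMono {N t s : ℕ} (h : t + s ≤ N) : StrictMono (gmap N t s h) := by
  intro i j hij
  have := gmap_val h i; have := gmap_val h j
  rw [Fin.lt_def] at *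
  rw [gmap_val, gmap_val]
  split <;> split <;> omega

lemma gmap_injective {N t s : ℕ} (h : t + s ≤ N) : Function.Injective (gmap N t s h) :=
  (gmap_strictMono h).injective

lemma gmap_le_iff {N t s : ℕ} (h : t + s ≤ N) {i j : Fin (N - s)} :
    gmap N t s h i ≤ gmap N t s h j ↔ i ≤ j := (gmap_strictMono h).le_iff_le

lemma gmap_lt_iff {N t s : ℕ} (h : t + s ≤ N) {i j : Fin (N - s)} :
    gmap N t s h i < gmap N t s h j ↔ i < j := (gmap_strictMono h).lt_iff_lt

lemma gmap_mod_two {N t s : ℕ} (h : t + s ≤ N) (hse : s % 2 = 0) (i : Fin (N - s)) :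
    ((gmap N t s h i : ℕ)) % 2 = (i : ℕ) % 2 := by
  rw [gmap_val]; split <;> omega

lemma gmap_not_mem_itv {N t ℓ s : ℕ} (h : t + s ≤ N) (hts : t + s = ℓ + 1) (i : Fin (N - s)) :
    gmap N t s h i ∉ itv N t ℓ := by
  rw [mem_itv, gmap_val]; split <;> omega

lemma gmap_surj_off_itv {N t ℓ s : ℕ} (h : t + s ≤ N) (hts : t + s = ℓ + 1) (x : Fin N)
    (hx : x ∉ itv N t ℓ) : ∃ i : Fin (N - s), gmap N t s h i = x := by
  rw [mem_itv] at hx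
  push_neg at hx
  by_cases hxt : (x : ℕ) < t
  · exact ⟨⟨x, by omega⟩, by apply Fin.ext; rw [gmap_val]; simp [hxt]⟩
  · have hxl : ℓ < (x : ℕ) := hx (by omega)
    have hxN := x.isLt
    refine ⟨⟨(x : ℕ) - s, by omega⟩, ?_⟩
    apply Fin.ext; rw [gmap_val]; simp only
    have : ¬ ((x : ℕ) - s < t) := by omega
    rw [if_neg this]; omega

section Bij

variable {N ℓ t s : ℕ}

/-- pull a block back along `gmap`. -/
def pmap (hN : t + s ≤ N) (S : Finset (Fin N)) : Finset (Fin (N - s)) :=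
  univ.filter fun i => gmap N t s hN i ∈ S

lemma mem_pmap {hN : t + s ≤ N} {S : Finset (Fin N)} {i : Fin (N - s)} :
    i ∈ pmap hN S ↔ gmap N t s hN i ∈ S := by simp [pmap]

lemma pmap_image (hN : t + s ≤ N) (T : Finset (Fin (N - s))) :
    pmap hN (T.image (gmap N t s hN)) = T := by
  ext i
  simp only [mem_pmap, mem_image]
  constructor
  · rintro ⟨j, hj, hgj⟩
    rwa [gmap_injective hN hgj] at hj
  · intro hi; exact ⟨i, hi, rfl⟩

lemma image_pmap (hN : t + s ≤ N) (hts : t + s = ℓ + 1) (S : Finset (Fin N))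
    (hSI : ∀ x ∈ S, x ∉ itv N t ℓ) :
    (pmap hN S).image (gmap N t s hN) = S := by
  ext x
  simp only [mem_image, mem_pmap]
  constructor
  · rintro ⟨i, hi, rfl⟩; exact hi
  · intro hx
    obtain ⟨i, rfl⟩ := gmap_surj_off_itv hN hts x (hSI x hx)
    exact ⟨i, hx, rfl⟩

lemma card_pmap (hN : t + s ≤ N) (hts : t + s = ℓ + 1) (S : Finset (Fin N))
    (hSI : ∀ x ∈ S, x ∉ itv N t ℓ) : (pmap hN S).card = S.card := by
  conv_rhs => rw [← image_pmap hN hts S hSI]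
  rw [card_image_of_injective _ (gmap_injective hN)]

end Bij

section Bij2
variable {N ℓ t s : ℕ}

lemma t_le_ell (hts : t + s = ℓ + 1) (hs2 : 2 ≤ s) : t ≤ ℓ := by omega

lemma ell_mem_itv (hts : t + s = ℓ + 1) (hs2 : 2 ≤ s) (hℓN : ℓ < N) :
    (⟨ℓ, hℓN⟩ : Fin N) ∈ itv N t ℓ := by
  rw [mem_itv]; constructor
  · exact t_le_ell hts hs2
  · exact le_rfl

lemma itv_ne_image (hN : t + s ≤ N) (hts : t + s = ℓ + 1) (hs2 : 2 ≤ s) (hℓN : ℓ < N)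
    (T : Finset (Fin (N - s))) : T.image (gmap N t s hN) ≠ itv N t ℓ := by
  intro hEq
  have : (⟨ℓ, hℓN⟩ : Fin N) ∈ T.image (gmap N t s hN) := hEq ▸ ell_mem_itv hts hs2 hℓN
  obtain ⟨i, _, hi⟩ := mem_image.1 this
  exact gmap_not_mem_itv hN hts i (hi ▸ ell_mem_itv hts hs2 hℓN)

lemma insert_mem_aux (hN : t + s ≤ N) (hts : t + s = ℓ + 1) (hs2 : 2 ≤ s) (hse : s % 2 = 0)
    (hℓN : ℓ < N) {Q : Finset (Finset (Fin (N - s)))} (hQ : Q ∈ NCEvenPrefix (N - s) t) :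
    insert (itv N t ℓ) (Q.image fun T => T.image (gmap N t s hN)) ∈ NCEvenPrefix N ℓ := by
  obtain ⟨hNC, hEven, hPre⟩ := mem_NCEvenPrefix.1 hQ
  rw [mem_NCEvenPrefix]
  refine ⟨⟨?_, ?_, ?_⟩, ?_, ?_⟩
  · -- unique block
    intro x
    by_cases hx : x ∈ itv N t ℓ
    · refine ⟨itv N t ℓ, ⟨mem_insert_self _ _, hx⟩, ?_⟩
      rintro S ⟨hS, hxS⟩
      rcases mem_insert.1 hS with h | h
      · exact h
      · obtain ⟨T, _, rfl⟩ := mem_image.1 h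
        obtain ⟨i, _, rfl⟩ := mem_image.1 hxS
        exact absurd hx (gmap_not_mem_itv hN hts i)
    · obtain ⟨i, rfl⟩ := gmap_surj_off_itv hN hts x hx
      obtain ⟨T, ⟨hT, hiT⟩, hTu⟩ := hNC.1 i
      refine ⟨T.image (gmap N t s hN), ⟨mem_insert_of_mem (mem_image_of_mem _ hT),
        mem_image_of_mem _ hiT⟩, ?_⟩
      rintro S ⟨hS, hxS⟩
      rcases mem_insert.1 hS with h | h
      · exact absurd (h ▸ hxS) hx
      · obtain ⟨T', hT', rfl⟩ := mem_image.1 h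
        obtain ⟨j, hj, hji⟩ := mem_image.1 hxS
        have : j = i := gmap_injective hN hji
        subst this
        rw [hTu T' ⟨hT', hj⟩]
  · -- no empty block
    intro hmem
    rcases mem_insert.1 hmem with h | h
    · have h2 := ell_mem_itv hts hs2 hℓN
      rw [← h] at h2
      exact notMem_empty _ h2
    · obtain ⟨T, hT, hTe⟩ := mem_image.1 h
      rw [Finset.image_eq_empty] at hTe
      exact hNC.2.1 (hTe ▸ hT)
  · -- noncrossing
    intro S hS T hT a ha b hb c hc d hd hab hbc hcd
    rcases mem_insert.1 hS with hSI | hSim <;> rcases mem_insert.1 hT with hTI | hTim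
    · rw [hSI, hTI]
    · -- S = I, T image : b strictly between a,c ∈ I
      exfalso
      obtain ⟨T', _, rfl⟩ := mem_image.1 hTim
      obtain ⟨j, _, rfl⟩ := mem_image.1 hb
      apply gmap_not_mem_itv hN hts j
      have haI := mem_itv.1 (hSI ▸ ha)
      have hcI := mem_itv.1 (hSI ▸ hc)
      rw [Fin.lt_def] at hab hbc
      rw [mem_itv]
      omega
    · -- T = I, S image : c strictly between b,d ∈ I
      exfalso
      obtain ⟨S', _, rfl⟩ := mem_image.1 hSim
      obtain ⟨j, _, rfl⟩ := mem_image.1 hc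
      apply gmap_not_mem_itv hN hts j
      have hbI := mem_itv.1 (hTI ▸ hb)
      have hdI := mem_itv.1 (hTI ▸ hd)
      rw [Fin.lt_def] at hbc hcd
      rw [mem_itv]
      omega
    · obtain ⟨S', hS', rfl⟩ := mem_image.1 hSim
      obtain ⟨T', hT', rfl⟩ := mem_image.1 hTim
      obtain ⟨a', ha', rfl⟩ := mem_image.1 ha
      obtain ⟨b', hb', rfl⟩ := mem_image.1 hb
      obtain ⟨c', hc', rfl⟩ := mem_image.1 hc
      obtain ⟨d', hd', rfl⟩ := mem_image.1 hd
      rw [gmap_lt_iff] at hab hbc hcd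
      rw [hNC.2.2 S' hS' T' hT' a' ha' b' hb' c' hc' d' hd' hab hbc hcd]
  · -- even blocks
    intro S hS
    rcases mem_insert.1 hS with h | h
    · rw [h, card_itv hℓN (t_le_ell hts hs2)]
      rw [Nat.even_iff]
      omega
    · obtain ⟨T, hT, rfl⟩ := mem_image.1 h
      rw [card_image_of_injective _ (gmap_injective hN)]
      exact hEven T hT
  · -- prefix condition
    intro S hS
    rcases mem_insert.1 hS with h | h
    · exact ⟨⟨ℓ, hℓN⟩, h ▸ ell_mem_itv hts hs2 hℓN, le_rfl⟩
    · obtain ⟨T, hT, rfl⟩ := mem_image.1 h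
      obtain ⟨a, haT, hta⟩ := hPre T hT
      refine ⟨gmap N t s hN a, mem_image_of_mem _ haT, ?_⟩
      rw [gmap_val]
      split <;> omega

end Bij2

section Bij3
variable {N ℓ t s : ℕ}

lemma block_avoid_itv {P : Finset (Finset (Fin N))} (hNC : IsNCPartition P)
    (hI : itv N t ℓ ∈ P) {S : Finset (Fin N)} (hS : S ∈ P) (hSne : S ≠ itv N t ℓ) :
    ∀ x ∈ S, x ∉ itv N t ℓ := by
  intro x hxS hxI
  exact hSne (hNC.block_eq hS hI hxS hxI)

lemma erase_mem_aux (hN : t + s ≤ N) (hts : t + s = ℓ + 1) (hs2 : 2 ≤ s) (hse : s % 2 = 0)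
    (hℓN : ℓ < N) {P : Finset (Finset (Fin N))} (hP : P ∈ NCEvenPrefix N ℓ)
    (hI : itv N t ℓ ∈ P) :
    (P.erase (itv N t ℓ)).image (pmap hN) ∈ NCEvenPrefix (N - s) t := by
  obtain ⟨hNC, hEven, hPre⟩ := mem_NCEvenPrefix.1 hP
  rw [mem_NCEvenPrefix]
  refine ⟨⟨?_, ?_, ?_⟩, ?_, ?_⟩
  · -- unique block
    intro i
    have hgi := gmap_not_mem_itv hN hts i
    obtain ⟨T, ⟨hT, hgT⟩, hTu⟩ := hNC.1 (gmap N t s hN i)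
    have hTne : T ≠ itv N t ℓ := fun h => hgi (h ▸ hgT)
    refine ⟨pmap hN T, ⟨mem_image_of_mem _ (mem_erase.2 ⟨hTne, hT⟩), mem_pmap.2 hgT⟩, ?_⟩
    rintro S ⟨hS, hiS⟩
    obtain ⟨S₀, hS₀, rfl⟩ := mem_image.1 hS
    have hS₀P := (mem_erase.1 hS₀).2
    rw [hTu S₀ ⟨hS₀P, mem_pmap.1 hiS⟩]
  · -- no empty
    intro hmem
    obtain ⟨S₀, hS₀, hSe⟩ := mem_image.1 hmem
    obtain ⟨hS₀ne, hS₀P⟩ := mem_erase.1 hS₀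
    have hne : S₀.Nonempty := Finset.nonempty_of_ne_empty (fun h => hNC.2.1 (h ▸ hS₀P))
    obtain ⟨x, hx⟩ := hne
    have hxI : x ∉ itv N t ℓ := block_avoid_itv hNC hI hS₀P hS₀ne x hx
    obtain ⟨i, rfl⟩ := gmap_surj_off_itv hN hts x hxI
    have : i ∈ pmap hN S₀ := mem_pmap.2 hx
    rw [hSe] at this
    exact notMem_empty _ this
  · -- noncrossing
    intro S hS T hT a ha b hb c hc d hd hab hbc hcd
    obtain ⟨S₀, hS₀, rfl⟩ := mem_image.1 hS
    obtain ⟨T₀, hT₀, rfl⟩ := mem_image.1 hT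
    have hS₀P := (mem_erase.1 hS₀).2
    have hT₀P := (mem_erase.1 hT₀).2
    have := hNC.2.2 S₀ hS₀P T₀ hT₀P _ (mem_pmap.1 ha) _ (mem_pmap.1 hb) _ (mem_pmap.1 hc)
      _ (mem_pmap.1 hd) ((gmap_lt_iff hN).2 hab) ((gmap_lt_iff hN).2 hbc)
      ((gmap_lt_iff hN).2 hcd)
    rw [this]
  · -- even
    intro S hS
    obtain ⟨S₀, hS₀, rfl⟩ := mem_image.1 hS
    obtain ⟨hS₀ne, hS₀P⟩ := mem_erase.1 hS₀
    rw [card_pmap hN hts S₀ (block_avoid_itv hNC hI hS₀P hS₀ne)]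
    exact hEven S₀ hS₀P
  · -- prefix
    intro S hS
    obtain ⟨S₀, hS₀, rfl⟩ := mem_image.1 hS
    obtain ⟨hS₀ne, hS₀P⟩ := mem_erase.1 hS₀
    obtain ⟨a, haS, hla⟩ := hPre S₀ hS₀P
    have haI : a ∉ itv N t ℓ := block_avoid_itv hNC hI hS₀P hS₀ne a haS
    obtain ⟨i, rfl⟩ := gmap_surj_off_itv hN hts a haI
    refine ⟨i, mem_pmap.2 haS, ?_⟩
    rw [gmap_val] at hla
    by_cases hit : (i : ℕ) < t
    · rw [if_pos hit] at hla
      omega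
    · omega

lemma roundtrip_left (hN : t + s ≤ N) (hts : t + s = ℓ + 1) (hs2 : 2 ≤ s) (hℓN : ℓ < N)
    (Q : Finset (Finset (Fin (N - s)))) :
    ((insert (itv N t ℓ) (Q.image fun T => T.image (gmap N t s hN))).erase
      (itv N t ℓ)).image (pmap hN) = Q := by
  rw [Finset.erase_insert]
  · rw [Finset.image_image]
    have : Q.image ((pmap hN) ∘ fun T => T.image (gmap N t s hN)) = Q.image id := by
      apply Finset.image_congr
      intro T _
      exact pmap_image hN T
    rw [this, Finset.image_id]
  · intro hmem
    obtain ⟨T, _, hT⟩ := mem_image.1 hmem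
    exact itv_ne_image hN hts hs2 hℓN T hT

lemma roundtrip_right (hN : t + s ≤ N) (hts : t + s = ℓ + 1) (hs2 : 2 ≤ s) (hℓN : ℓ < N)
    {P : Finset (Finset (Fin N))} (hP : P ∈ NCEvenPrefix N ℓ) (hI : itv N t ℓ ∈ P) :
    insert (itv N t ℓ)
      (((P.erase (itv N t ℓ)).image (pmap hN)).image fun T => T.image (gmap N t s hN)) = P := by
  obtain ⟨hNC, _, _⟩ := mem_NCEvenPrefix.1 hP
  rw [Finset.image_image]
  have : (P.erase (itv N t ℓ)).image ((fun T => T.image (gmap N t s hN)) ∘ (pmap hN))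
      = (P.erase (itv N t ℓ)).image id := by
    apply Finset.image_congr
    intro S hS
    rw [Finset.mem_coe] at hS
    obtain ⟨hSne, hSP⟩ := mem_erase.1 hS
    exact image_pmap hN hts S (block_avoid_itv hNC hI hSP hSne)
  rw [this, Finset.image_id, Finset.insert_erase hI]

end Bij3

section Bij4
variable {N ℓ t s : ℕ}

lemma itv_not_mem_image (hN : t + s ≤ N) (hts : t + s = ℓ + 1) (hs2 : 2 ≤ s) (hℓN : ℓ < N)
    (Q : Finset (Finset (Fin (N - s)))) :
    itv N t ℓ ∉ Q.image fun T => T.image (gmap N t s hN) := by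
  intro h
  obtain ⟨T, _, hT⟩ := mem_image.1 h
  exact itv_ne_image hN hts hs2 hℓN T hT

lemma cond_itv_iff (hN : t + s ≤ N) (hts : t + s = ℓ + 1) (hs2 : 2 ≤ s) (hℓN : ℓ < N) :
    (∃ a : Fin N, a ∈ itv N t ℓ ∧ (∀ b ∈ itv N t ℓ, a ≤ b) ∧ (a : ℕ) % 2 = 1)
      ↔ t % 2 = 1 := by
  have htN : t < N := by omega
  have htI : (⟨t, htN⟩ : Fin N) ∈ itv N t ℓ := mem_itv.2 (by simp only [Fin.val_mk]; omega)
  constructor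
  · rintro ⟨a, haI, hmin, hodd⟩
    have h1 := (mem_itv.1 haI).1
    have h2 := hmin _ htI
    rw [Fin.le_def] at h2
    simp only [Fin.val_mk] at h2
    omega
  · intro ht
    refine ⟨⟨t, htN⟩, htI, ?_, ht⟩
    intro b hb
    rw [Fin.le_def]
    simp only [Fin.val_mk]
    exact (mem_itv.1 hb).1

lemma cond_image_iff (hN : t + s ≤ N) (hse : s % 2 = 0) (T : Finset (Fin (N - s))) :
    (∃ a : Fin N, a ∈ T.image (gmap N t s hN) ∧
        (∀ b ∈ T.image (gmap N t s hN), a ≤ b) ∧ (a : ℕ) % 2 = 1)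
      ↔ (∃ a : Fin (N - s), a ∈ T ∧ (∀ b ∈ T, a ≤ b) ∧ (a : ℕ) % 2 = 1) := by
  constructor
  · rintro ⟨a, haT, hmin, hodd⟩
    obtain ⟨a', ha', rfl⟩ := mem_image.1 haT
    refine ⟨a', ha', fun b hb => ?_, ?_⟩
    · exact (gmap_le_iff hN).1 (hmin _ (mem_image_of_mem _ hb))
    · rw [gmap_mod_two hN hse] at hodd
      exact hodd
  · rintro ⟨a, haT, hmin, hodd⟩
    refine ⟨gmap N t s hN a, mem_image_of_mem _ haT, ?_, ?_⟩
    · rintro b hb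
      obtain ⟨b', hb', rfl⟩ := mem_image.1 hb
      exact (gmap_le_iff hN).2 (hmin b' hb')
    · rw [gmap_mod_two hN hse]
      exact hodd

lemma emc_image (hN : t + s ≤ N) (hse : s % 2 = 0) (Q : Finset (Finset (Fin (N - s)))) :
    evenMinCount (Q.image fun T => T.image (gmap N t s hN)) = evenMinCount Q := by
  unfold evenMinCount
  rw [Finset.filter_image,
    Finset.card_image_of_injective _ (Finset.image_injective (gmap_injective hN))]
  congr 1
  apply Finset.filter_congr
  intro T _
  exact cond_image_iff hN hse T

lemma emc_insert (hN : t + s ≤ N) (hts : t + s = ℓ + 1) (hs2 : 2 ≤ s) (hℓN : ℓ < N)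
    (Q : Finset (Finset (Fin (N - s)))) :
    evenMinCount (insert (itv N t ℓ) (Q.image fun T => T.image (gmap N t s hN)))
      = t % 2 + evenMinCount (Q.image fun T => T.image (gmap N t s hN)) := by
  unfold evenMinCount
  rw [Finset.filter_insert]
  split_ifs with hc
  · have ht : t % 2 = 1 := (cond_itv_iff hN hts hs2 hℓN).1 hc
    rw [Finset.card_insert_of_notMem
      (fun hmem => itv_not_mem_image hN hts hs2 hℓN Q (Finset.mem_of_mem_filter _ hmem))]
    omega
  · have ht : ¬ t % 2 = 1 := fun h => hc ((cond_itv_iff hN hts hs2 hℓN).2 h)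
    omega

lemma wgt_insert_eq (γ : ℝ) (κ : ℕ → ℝ) (hN : t + s ≤ N) (hts : t + s = ℓ + 1)
    (hs2 : 2 ≤ s) (hse : s % 2 = 0) (hℓN : ℓ < N) (Q : Finset (Finset (Fin (N - s)))) :
    wgt γ κ (insert (itv N t ℓ) (Q.image fun T => T.image (gmap N t s hN)))
      = γ ^ (t % 2) * κ s * wgt γ κ Q := by
  unfold wgt
  rw [Finset.prod_insert (itv_not_mem_image hN hts hs2 hℓN Q),
    Finset.prod_image (fun x _ y _ h => Finset.image_injective (gmap_injective hN) h),
    emc_insert hN hts hs2 hℓN, emc_image hN hse]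
  have hcard : (itv N t ℓ).card = s := by
    rw [card_itv hℓN (t_le_ell hts hs2)]
    omega
  rw [hcard]
  have hcards : ∀ T ∈ Q, κ ((T.image (gmap N t s hN)).card) = κ T.card := by
    intro T _
    rw [card_image_of_injective _ (gmap_injective hN)]
  rw [Finset.prod_congr rfl hcards, pow_add]
  ring

lemma sum_block (γ : ℝ) (κ : ℕ → ℝ) (hN : t + s ≤ N) (hts : t + s = ℓ + 1)
    (hs2 : 2 ≤ s) (hse : s % 2 = 0) (hℓN : ℓ < N) :
    ∑ P ∈ (NCEvenPrefix N ℓ).filter (fun P => itv N t ℓ ∈ P), wgt γ κ P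
      = γ ^ (t % 2) * κ s * Ssum γ κ (N - s) t := by
  rw [Ssum, Finset.mul_sum]
  symm
  refine Finset.sum_nbij'
    (fun Q => insert (itv N t ℓ) (Q.image fun T => T.image (gmap N t s hN)))
    (fun P => (P.erase (itv N t ℓ)).image (pmap hN)) ?_ ?_ ?_ ?_ ?_
  · intro Q hQ
    rw [Finset.mem_filter]
    exact ⟨insert_mem_aux hN hts hs2 hse hℓN hQ, mem_insert_self _ _⟩
  · intro P hP
    obtain ⟨hP', hI⟩ := Finset.mem_filter.1 hP
    exact erase_mem_aux hN hts hs2 hse hℓN hP' hI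
  · intro Q _
    exact roundtrip_left hN hts hs2 hℓN Q
  · intro P hP
    obtain ⟨hP', hI⟩ := Finset.mem_filter.1 hP
    exact roundtrip_right hN hts hs2 hℓN hP' hI
  · intro Q _
    exact (wgt_insert_eq γ κ hN hts hs2 hse hℓN Q).symm

end Bij4

section Classify
variable {N ℓ : ℕ}

lemma ell_mem_of_sub {P : Finset (Finset (Fin N))} (hℓN : ℓ < N)
    (hP : P ∈ NCEvenPrefix N ℓ) {T : Finset (Fin N)} (hT : T ∈ P)
    (hTsub : ∀ x ∈ T, (x : ℕ) ≤ ℓ) : (⟨ℓ, hℓN⟩ : Fin N) ∈ T := by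
  obtain ⟨_, _, hPre⟩ := mem_NCEvenPrefix.1 hP
  obtain ⟨a, haT, hla⟩ := hPre T hT
  have : a = (⟨ℓ, hℓN⟩ : Fin N) := by
    apply Fin.ext
    simp only [Fin.val_mk]
    exact le_antisymm (hTsub a haT) hla
  rwa [this] at haT

lemma block_is_itv (hℓN : ℓ < N) {P : Finset (Finset (Fin N))}
    (hP : P ∈ NCEvenPrefix N ℓ) {T : Finset (Fin N)} (hT : T ∈ P)
    (hTsub : ∀ x ∈ T, (x : ℕ) ≤ ℓ) : T = itv N (ℓ + 1 - T.card) ℓ := by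
  obtain ⟨hNC, hEven, hPre⟩ := mem_NCEvenPrefix.1 hP
  have hle : (⟨ℓ, hℓN⟩ : Fin N) ∈ T := ell_mem_of_sub hℓN hP hT hTsub
  have hTne : T.Nonempty := ⟨_, hle⟩
  set m₀ := T.min' hTne with hm₀
  have hm₀T : m₀ ∈ T := T.min'_mem hTne
  -- interval claim
  have hint : ∀ x : Fin N, m₀ ≤ x → (x : ℕ) ≤ ℓ → x ∈ T := by
    intro x hmx hxl
    by_contra hxT
    obtain ⟨U, ⟨hU, hxU⟩, _⟩ := hNC.1 x
    have hUT : U ≠ T := fun h => hxT (h ▸ hxU)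
    obtain ⟨d, hdU, hld⟩ := hPre U hU
    have hdl : ℓ < (d : ℕ) := by
      rcases lt_or_eq_of_le hld with h | h
      · exact h
      · exfalso
        have : d = (⟨ℓ, hℓN⟩ : Fin N) := Fin.ext (by simp only [Fin.val_mk]; omega)
        exact hUT (hNC.block_eq hU hT (this ▸ hdU) hle)
    have h1 : m₀ < x := lt_of_le_of_ne hmx (fun h => hxT (h ▸ hm₀T))
    have h2 : x < (⟨ℓ, hℓN⟩ : Fin N) := by
      rw [Fin.lt_def]
      simp only [Fin.val_mk]
      rcases lt_or_eq_of_le hxl with h | h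
      · exact h
      · exfalso
        have hxe : x = (⟨ℓ, hℓN⟩ : Fin N) := Fin.ext (by simp only [Fin.val_mk]; omega)
        exact hxT (hxe ▸ hle)
    have h3 : (⟨ℓ, hℓN⟩ : Fin N) < d := by rw [Fin.lt_def]; simpa using hdl
    exact hUT (hNC.2.2 T hT U hU m₀ hm₀T x hxU _ hle d hdU h1 h2 h3).symm
  have hTitv : T = itv N (m₀ : ℕ) ℓ := by
    ext x
    rw [mem_itv]
    constructor
    · intro hx
      exact ⟨T.min'_le x hx, hTsub x hx⟩
    · rintro ⟨h1, h2⟩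
      exact hint x h1 h2
  have hm₀ℓ : (m₀ : ℕ) ≤ ℓ := hTsub _ hm₀T
  have hcard : T.card = ℓ + 1 - (m₀ : ℕ) := by rw [hTitv, card_itv hℓN hm₀ℓ]
  have : ℓ + 1 - T.card = (m₀ : ℕ) := by omega
  rw [this, ← hTitv]

lemma itv_unique_in {P : Finset (Finset (Fin N))} (hℓN : ℓ < N) (hNC : IsNCPartition P)
    {t1 t2 : ℕ} (h1 : t1 ≤ ℓ) (h2 : t2 ≤ ℓ) (hI1 : itv N t1 ℓ ∈ P) (hI2 : itv N t2 ℓ ∈ P) :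
    t1 = t2 := by
  have hel1 : (⟨ℓ, hℓN⟩ : Fin N) ∈ itv N t1 ℓ := mem_itv.2 (by simp only [Fin.val_mk]; omega)
  have hel2 : (⟨ℓ, hℓN⟩ : Fin N) ∈ itv N t2 ℓ := mem_itv.2 (by simp only [Fin.val_mk]; omega)
  have heq := hNC.block_eq hI1 hI2 hel1 hel2
  have ht1 : (⟨t1, by omega⟩ : Fin N) ∈ itv N t1 ℓ := mem_itv.2 (by simp only [Fin.val_mk]; omega)
  have ht2 : (⟨t2, by omega⟩ : Fin N) ∈ itv N t2 ℓ := mem_itv.2 (by simp only [Fin.val_mk]; omega)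
  rw [heq] at ht1
  rw [← heq] at ht2
  rw [mem_itv] at ht1 ht2
  simp only [Fin.val_mk] at ht1 ht2
  omega

lemma filter_prefix_succ (N ℓ : ℕ) :
    (NCEvenPrefix N ℓ).filter (fun P => ∀ S ∈ P, ∃ a : Fin N, a ∈ S ∧ ℓ + 1 ≤ (a : ℕ))
      = NCEvenPrefix N (ℓ + 1) := by
  ext P
  simp only [mem_filter, mem_NCEvenPrefix]
  constructor
  · rintro ⟨⟨h1, h2, _⟩, h4⟩
    exact ⟨h1, h2, h4⟩
  · rintro ⟨h1, h2, h3⟩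
    refine ⟨⟨h1, h2, fun S hS => ?_⟩, h3⟩
    obtain ⟨a, ha, hla⟩ := h3 S hS
    exact ⟨a, ha, by omega⟩

lemma step (γ : ℝ) (κ : ℕ → ℝ) (hℓN : ℓ < N) :
    Ssum γ κ N ℓ = Ssum γ κ N (ℓ + 1)
      + ∑ m ∈ range ((ℓ + 1) / 2),
          γ ^ ((ℓ + 1 - 2 * (m + 1)) % 2) * κ (2 * (m + 1))
            * Ssum γ κ (N - 2 * (m + 1)) (ℓ + 1 - 2 * (m + 1)) := by
  conv_lhs => rw [Ssum,
    ← Finset.sum_filter_add_sum_filter_not (NCEvenPrefix N ℓ)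
      (fun P => ∀ S ∈ P, ∃ a : Fin N, a ∈ S ∧ ℓ + 1 ≤ (a : ℕ)) (wgt γ κ)]
  congr 1
  · rw [filter_prefix_succ, Ssum]
  · have hdecomp : (NCEvenPrefix N ℓ).filter (fun P => ¬ ∀ S ∈ P, ∃ a : Fin N, a ∈ S ∧ ℓ + 1 ≤ (a : ℕ))
        = (range ((ℓ + 1) / 2)).biUnion
            (fun m => (NCEvenPrefix N ℓ).filter (fun P => itv N (ℓ + 1 - 2 * (m + 1)) ℓ ∈ P)) := by
      ext P
      simp only [mem_biUnion, mem_filter, mem_range]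
      constructor
      · rintro ⟨hP, hnQ⟩
        push_neg at hnQ
        obtain ⟨T, hT, hTsub⟩ := hnQ
        have hTsub' : ∀ x ∈ T, (x : ℕ) ≤ ℓ := fun x hx => by
          have := hTsub x hx
          omega
        have hTitv := block_is_itv hℓN hP hT hTsub'
        have hcard2 : Even T.card := (mem_NCEvenPrefix.1 hP).2.1 T hT
        have hne : (⟨ℓ, hℓN⟩ : Fin N) ∈ T := ell_mem_of_sub hℓN hP hT hTsub'
        have hc1 : 1 ≤ T.card := Finset.card_pos.2 ⟨_, hne⟩
        have hcle : T.card ≤ ℓ + 1 := by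
          have := card_itv (t := ℓ + 1 - T.card) hℓN (by omega)
          rw [← hTitv] at this
          omega
        rw [Nat.even_iff] at hcard2
        refine ⟨T.card / 2 - 1, by omega, hP, ?_⟩
        have : 2 * (T.card / 2 - 1 + 1) = T.card := by omega
        rw [this, ← hTitv]
        exact hT
      · rintro ⟨m, hm, hP, hI⟩
        refine ⟨hP, fun hQ => ?_⟩
        obtain ⟨a, haI, hla⟩ := hQ _ hI
        rw [mem_itv] at haI
        omega
    rw [hdecomp, Finset.sum_biUnion]
    · apply Finset.sum_congr rfl
      intro m hm
      rw [mem_range] at hm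
      have h2m : 2 * (m + 1) ≤ ℓ + 1 := by omega
      exact sum_block γ κ (by omega) (by omega) (by omega) (by omega) hℓN
    · intro m1 hm1 m2 hm2 hne
      simp only [Finset.coe_range, Set.mem_Iio] at hm1 hm2
      apply Finset.disjoint_left.2
      intro P hP1 hP2
      obtain ⟨hP, hI1⟩ := mem_filter.1 hP1
      obtain ⟨_, hI2⟩ := mem_filter.1 hP2
      have hNC := (mem_NCEvenPrefix.1 hP).1
      have := itv_unique_in hℓN hNC (t1 := ℓ + 1 - 2 * (m1 + 1)) (t2 := ℓ + 1 - 2 * (m2 + 1))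
        (by omega) (by omega) hI1 hI2
      omega

end Classify

section Assemble

lemma NCEvenPrefix_zero : NCEvenPrefix 0 0 = {∅} := by
  ext P
  rw [mem_NCEvenPrefix, Finset.mem_singleton]
  constructor
  · rintro ⟨⟨_, hne, _⟩, _, _⟩
    by_contra hP
    obtain ⟨S, hS⟩ := Finset.nonempty_of_ne_empty hP
    have : S = ∅ := Finset.eq_empty_of_isEmpty S
    exact hne (this ▸ hS)
  · rintro rfl
    refine ⟨⟨fun i => i.elim0, by simp, ?_⟩, by simp, by simp⟩
    intro S hS
    exact absurd hS (Finset.notMem_empty _)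

lemma Ssum_zero (γ : ℝ) (κ : ℕ → ℝ) : Ssum γ κ 0 0 = 1 := by
  rw [Ssum, NCEvenPrefix_zero, Finset.sum_singleton]
  unfold wgt evenMinCount
  simp

lemma NCEvenPrefix_empty (n ℓ : ℕ) (h1 : 0 < n) (h2 : n ≤ ℓ) : NCEvenPrefix n ℓ = ∅ := by
  ext P
  simp only [Finset.notMem_empty, iff_false]
  rw [mem_NCEvenPrefix]
  rintro ⟨hNC, _, hPre⟩
  obtain ⟨S, ⟨hS, _⟩, _⟩ := hNC.1 ⟨0, h1⟩
  obtain ⟨a, _, hla⟩ := hPre S hS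
  have := a.isLt
  omega

lemma O_of_E (γ : ℝ) (κ : ℕ → ℝ) (hκ0 : κ 0 = 1) (k : ℕ)
    (hE : ∀ j, rcEven (fun n => κ (2 * n)) (fun n => if n = 0 then 1 else γ * κ (2 * n)) k j
      = Ssum γ κ (2 * k + 2 * j) (2 * j)) (j : ℕ) :
    rcOdd (fun n => κ (2 * n)) (fun n => if n = 0 then 1 else γ * κ (2 * n)) k j
      = Ssum γ κ (2 * k + 2 * j + 2) (2 * j + 1) := by
  rw [step γ κ (N := 2 * k + 2 * j + 2) (ℓ := 2 * j + 1) (by omega)]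
  simp only [rcOdd]
  rw [Finset.sum_range_succ]
  have hB : rcEven (fun n => κ (2 * n)) (fun n => if n = 0 then 1 else γ * κ (2 * n)) k (j + 1)
        * κ (2 * (j + 1 - (j + 1)))
      = Ssum γ κ (2 * k + 2 * j + 2) (2 * j + 1 + 1) := by
    have e0 : 2 * (j + 1 - (j + 1)) = 0 := by omega
    rw [e0, hκ0, mul_one]
    have e1 : 2 * k + 2 * j + 2 = 2 * k + 2 * (j + 1) := by ring
    have e2 : 2 * j + 1 + 1 = 2 * (j + 1) := by ring
    rw [e1, e2]
    exact hE (j + 1)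
  have hA : (∑ m ∈ range (j + 1),
        rcEven (fun n => κ (2 * n)) (fun n => if n = 0 then 1 else γ * κ (2 * n)) k m
          * κ (2 * (j + 1 - m)))
      = ∑ m ∈ range ((2 * j + 1 + 1) / 2),
          γ ^ ((2 * j + 1 + 1 - 2 * (m + 1)) % 2) * κ (2 * (m + 1))
            * Ssum γ κ (2 * k + 2 * j + 2 - 2 * (m + 1)) (2 * j + 1 + 1 - 2 * (m + 1)) := by
    have hd : (2 * j + 1 + 1) / 2 = j + 1 := by omega
    rw [hd, ← Finset.sum_range_reflect]
    apply Finset.sum_congr rfl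
    intro m hm
    rw [mem_range] at hm
    have e1 : j + 1 - 1 - m = j - m := by omega
    have e2 : 2 * (j + 1 - (j - m)) = 2 * (m + 1) := by omega
    have e3 : 2 * j + 1 + 1 - 2 * (m + 1) = 2 * (j - m) := by omega
    have e4 : 2 * k + 2 * j + 2 - 2 * (m + 1) = 2 * k + 2 * (j - m) := by omega
    have e5 : (2 * (j - m)) % 2 = 0 := by omega
    rw [e1, e2, e3, e4, e5, pow_zero, one_mul, hE (j - m)]
    ring
  linarith [hA, hB]

lemma E_of_O (γ : ℝ) (κ : ℕ → ℝ) (hκ0 : κ 0 = 1) (k : ℕ)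
    (hO : ∀ j, rcOdd (fun n => κ (2 * n)) (fun n => if n = 0 then 1 else γ * κ (2 * n)) k j
      = Ssum γ κ (2 * k + 2 * j + 2) (2 * j + 1)) (j : ℕ) :
    rcEven (fun n => κ (2 * n)) (fun n => if n = 0 then 1 else γ * κ (2 * n)) (k + 1) j
      = Ssum γ κ (2 * (k + 1) + 2 * j) (2 * j) := by
  have hN : 2 * (k + 1) + 2 * j = 2 * k + 2 * j + 2 := by ring
  rw [hN, step γ κ (N := 2 * k + 2 * j + 2) (ℓ := 2 * j) (by omega)]
  simp only [rcEven]
  have fold : ∀ m : ℕ, (∑ m' ∈ range (m + 2),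
      rcEven (fun n => κ (2 * n)) (fun n => if n = 0 then 1 else γ * κ (2 * n)) k m'
        * κ (2 * (m + 1 - m')))
      = rcOdd (fun n => κ (2 * n)) (fun n => if n = 0 then 1 else γ * κ (2 * n)) k m :=
    fun m => rfl
  simp only [fold]
  rw [Finset.sum_range_succ]
  have hB : rcOdd (fun n => κ (2 * n)) (fun n => if n = 0 then 1 else γ * κ (2 * n)) k j
        * (if j - j = 0 then (1 : ℝ) else γ * κ (2 * (j - j)))
      = Ssum γ κ (2 * k + 2 * j + 2) (2 * j + 1) := by
    rw [Nat.sub_self, if_pos rfl, mul_one]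
    exact hO j
  have hA : (∑ m ∈ range j,
        rcOdd (fun n => κ (2 * n)) (fun n => if n = 0 then 1 else γ * κ (2 * n)) k m
          * (if j - m = 0 then (1 : ℝ) else γ * κ (2 * (j - m))))
      = ∑ m ∈ range ((2 * j + 1) / 2),
          γ ^ ((2 * j + 1 - 2 * (m + 1)) % 2) * κ (2 * (m + 1))
            * Ssum γ κ (2 * k + 2 * j + 2 - 2 * (m + 1)) (2 * j + 1 - 2 * (m + 1)) := by
    have hd : (2 * j + 1) / 2 = j := by omega
    rw [hd, ← Finset.sum_range_reflect]
    apply Finset.sum_congr rfl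
    intro m hm
    rw [mem_range] at hm
    have e1 : j - 1 - m = j - m - 1 := by omega
    have e2 : j - (j - m - 1) = m + 1 := by omega
    have e3 : 2 * j + 1 - 2 * (m + 1) = 2 * (j - m - 1) + 1 := by omega
    have e4 : 2 * k + 2 * j + 2 - 2 * (m + 1) = 2 * k + 2 * (j - m - 1) + 2 := by omega
    have e5 : (2 * (j - m - 1) + 1) % 2 = 1 := by omega
    rw [e1, e2, e3, e4, e5, pow_one, if_neg (by omega), hO (j - m - 1)]
    ring
  linarith [hA, hB]

lemma E_all (γ : ℝ) (κ : ℕ → ℝ) (hκ0 : κ 0 = 1) : ∀ k j,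
    rcEven (fun n => κ (2 * n)) (fun n => if n = 0 then 1 else γ * κ (2 * n)) k j
      = Ssum γ κ (2 * k + 2 * j) (2 * j) := by
  intro k
  induction k with
  | zero =>
    intro j
    simp only [rcEven]
    by_cases hj : j = 0
    · subst hj
      rw [if_pos rfl]
      exact (Ssum_zero γ κ).symm
    · rw [if_neg hj]
      have : NCEvenPrefix (2 * 0 + 2 * j) (2 * j) = ∅ :=
        NCEvenPrefix_empty _ _ (by omega) (by omega)
      rw [Ssum, this, Finset.sum_empty]
  | succ k ih =>
    intro j
    exact E_of_O γ κ hκ0 k (O_of_E γ κ hκ0 k ih) j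

end Assemble

/-- **Combinatorial interpretation of the odd rectangular partial moment coefficients:**
for all `k, j ≥ 0`,
`c_{2k+1,j} = Σ_{π ∈ NC'(2k+2j+2, 2j+1)} γ^{e(π)} Π_{S ∈ π} κ_{|S|}`.
Here `κ : ℕ → ℝ` is the full cumulant sequence (only even indices occur, `κ 0 = 1`),
`κ̄_{2n} = γ κ_{2n}` for `n ≥ 1` with `κ̄_0 = 1`, and `c_{2k+1,j}` is defined by the
recursions with `a n = κ_{2n}` and `b n = κ̄_{2n}`. -/
theorem rcOdd_eq_sum_noncrossing (γ : ℝ) (hγ : 0 < γ) (κ : ℕ → ℝ) (hκ0 : κ 0 = 1)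
    (k j : ℕ) :
    rcOdd (fun n => κ (2 * n)) (fun n => if n = 0 then 1 else γ * κ (2 * n)) k j
      = ∑ P ∈ NCEvenPrefix (2 * k + 2 * j + 2) (2 * j + 1),
          γ ^ evenMinCount P * ∏ S ∈ P, κ S.card := by
  rw [O_of_E γ κ hκ0 k (E_all γ κ hκ0 k) j, Ssum]
  apply Finset.sum_congr rfl
  intro P _
  rfl
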